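/- Let n = n₁n₂⋯n_s·m with n₁ ≥ n₂ ≥ … ≥ n_s ≥ 2, n_{i+1} | n_i for 1 ≤ i ≤ s−1, and m ≥ 1. Identify ℂⁿ with ℂ^{n₁} ⊗ ⋯ ⊗ ℂ^{n_s} ⊗ ℂ^m, and let F be the subgroup of PU(n) generated by H_{n₁} ⊗ ⋯ ⊗ H_{n_s} (acting on the first s tensor factors, identity on ℂ^m) together with the classes of the matrices I ⊗ ⋯ ⊗ I ⊗ D for all diagonal unitary D ∈ U(m). Then F is a maximal abelian subgroup of PU(n): F is abelian, and every element of PU(n) that commutes with all elements of F lies in F. -/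

import Mathlib

open Matrix

noncomputable section

/-- The unitary group `U(ι)` of complex unitary matrices indexed by `ι`. -/
abbrev UG (ι : Type) [Fintype ι] [DecidableEq ι] := Matrix.unitaryGroup ι ℂ

variable (ι : Type) [Fintype ι] [DecidableEq ι]

/-- The central subgroup `Z_n = {λ I : |λ| = 1}` of scalar unitary matrices. -/
def scalarSG : Subgroup (UG ι) where
  carrier := {A | ∃ c : ℂ, ‖c‖ = 1 ∧ (A : Matrix ι ι ℂ) = c • (1 : Matrix ι ι ℂ)}
  one_mem' := ⟨1, by simp, by simp⟩
  mul_mem' := by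
    rintro A B ⟨a, ha, hA⟩ ⟨b, hb, hB⟩
    exact ⟨a * b, by simp [ha, hb], by
      simp only [Matrix.UnitaryGroup.mul_val, hA, hB, smul_mul_smul_comm, mul_one]⟩
  inv_mem' := by
    rintro A ⟨a, ha, hA⟩
    refine ⟨star a, by simpa using ha, ?_⟩
    have : ((A⁻¹ : UG ι) : Matrix ι ι ℂ) = star (A : Matrix ι ι ℂ) :=
      Matrix.UnitaryGroup.inv_val A
    rw [this, hA]
    simp [Matrix.star_eq_conjTranspose, Matrix.conjTranspose_smul]

instance scalarSG_normal : (scalarSG ι).Normal := by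
  constructor
  rintro A ⟨a, ha, hA⟩ g
  refine ⟨a, ha, ?_⟩
  have h1 : ((g * A * g⁻¹ : UG ι) : Matrix ι ι ℂ)
      = (g : Matrix ι ι ℂ) * (A : Matrix ι ι ℂ) * ((g⁻¹ : UG ι) : Matrix ι ι ℂ) := rfl
  rw [h1, hA]
  have h2 : (g : Matrix ι ι ℂ) * ((g⁻¹ : UG ι) : Matrix ι ι ℂ) = 1 := by
    have := Matrix.UnitaryGroup.mul_val g g⁻¹
    rw [mul_inv_cancel] at this
    simpa using this.symm
  calc (g : Matrix ι ι ℂ) * (a • (1 : Matrix ι ι ℂ)) * ((g⁻¹ : UG ι) : Matrix ι ι ℂ)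
      = a • ((g : Matrix ι ι ℂ) * ((g⁻¹ : UG ι) : Matrix ι ι ℂ)) := by
        simp [mul_smul_comm, smul_mul_assoc]
    _ = a • (1 : Matrix ι ι ℂ) := by rw [h2]

/-- The projective unitary group `PU(ι) = U(ι)/Z`. -/
abbrev PU := UG ι ⧸ scalarSG ι


/-- The diagonal matrix `A_k = diag(1, ω_k, …, ω_k^{k-1})`, where `ω_k = e^{2πi/k}`. -/
def Amat (k : ℕ) : Matrix (Fin k) (Fin k) ℂ :=
  Matrix.diagonal fun i => Complex.exp (2 * Real.pi * Complex.I / (k : ℂ)) ^ (i : ℕ)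

/-- The cyclic permutation matrix `B_k` sending the `i`-th standard basis vector to the
`(i+1)`-st (indices mod `k`). -/
def Bmat (k : ℕ) : Matrix (Fin k) (Fin k) ℂ :=
  Matrix.of fun i j : Fin k => if (i : ℕ) = ((j : ℕ) + 1) % k then 1 else 0

/-- The Kronecker factor embedding: the matrix acting as `M` on the `i`-th tensor factor of
`ℂ^{n₁} ⊗ ⋯ ⊗ ℂ^{n_s}` and as the identity on all other factors. -/
def kronFactor {s : ℕ} (nn : Fin s → ℕ) (i : Fin s)
    (M : Matrix (Fin (nn i)) (Fin (nn i)) ℂ) :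
    Matrix ((j : Fin s) → Fin (nn j)) ((j : Fin s) → Fin (nn j)) ℂ :=
  Matrix.of fun x y => if ∀ j, j ≠ i → x j = y j then M (x i) (y i) else 0

/-- The subgroup of `PU(n)` generated by `H_{n₁} ⊗ ⋯ ⊗ H_{n_s}` (acting on the first `s`
tensor factors, identity on `ℂ^m`) together with the classes of `I ⊗ ⋯ ⊗ I ⊗ D` for all
diagonal unitary `D ∈ U(m)`, with respect to an identification `e` of `ℂⁿ` with
`ℂ^{n₁} ⊗ ⋯ ⊗ ℂ^{n_s} ⊗ ℂ^m`. -/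
def maxAbelianA (n m : ℕ) {s : ℕ} (nn : Fin s → ℕ)
    (e : (((j : Fin s) → Fin (nn j)) × Fin m) ≃ Fin n) :
    Subgroup (PU (Fin n)) :=
  Subgroup.closure
    ({x | ∃ (i : Fin s) (U : UG (Fin n)), (QuotientGroup.mk U : PU (Fin n)) = x ∧
      ((∀ a b u v, (U : Matrix (Fin n) (Fin n) ℂ) (e (a, u)) (e (b, v))
          = if u = v then kronFactor nn i (Amat (nn i)) a b else 0) ∨
       (∀ a b u v, (U : Matrix (Fin n) (Fin n) ℂ) (e (a, u)) (e (b, v))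
          = if u = v then kronFactor nn i (Bmat (nn i)) a b else 0))} ∪
     {x | ∃ (d : Fin m → ℂ) (U : UG (Fin n)), (∀ u, ‖d u‖ = 1) ∧
      (QuotientGroup.mk U : PU (Fin n)) = x ∧
      (∀ a b u v, (U : Matrix (Fin n) (Fin n) ℂ) (e (a, u)) (e (b, v))
          = if a = b ∧ u = v then d u else 0)})

/-!
Write `ℂⁿ = ℂ^G ⊗ ℂ^m` with `G = ℤ/n₁ × ⋯ × ℤ/n_s`. On `ℂ^G`, `A_{n_i}` and `B_{n_i}` acting on
the `i`-th factor are the clock operator `C_{e_i} = diag ⟨e_i, ·⟩` and the translation `τ_{e_i}`,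
for the bicharacter `⟨b, x⟩ = ∏ ω_{n_j} ^ (b_j x_j)`. Any two generators of `F` commute up to a
scalar, so `F` is abelian in `PU(n)`.

Conversely, let `M` be unitary with `[M]` commuting with `F`. Then `M` commutes up to a scalar with
every generator. The scalars attached to `C_{e_i} ⊗ 1` and `τ_{e_i} ⊗ 1` are `n_i`-th roots of
unity, so a single Weyl operator `W = τ_w C_b` produces the same scalars. Hence `M (W ⊗ 1)⁻¹`
commutes with every clock and translation; since the characters separate the points of `G` and the
`e_i` generate `G`, it is of the form `1 ⊗ N`. Commuting up to scalars with every `1 ⊗ D`, `D`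
diagonal unitary, forces `N` to be diagonal, and `[M] = [W ⊗ 1] [1 ⊗ N] ∈ F`.
-/

open scoped Kronecker

lemma ne_zero_of_norm_eq_one {E : Type*} [NormedAddCommGroup E] {x : E} (h : ‖x‖ = 1) :
    x ≠ 0 :=
  norm_ne_zero_iff.mp (h ▸ one_ne_zero)

section PhaseCommute

variable {R : Type*} [Ring R] [Algebra ℂ R]

def PhaseCommute (X Y : R) : Prop := ∃ γ : ℂ, ‖γ‖ = 1 ∧ X * Y = γ • (Y * X)

lemma PhaseCommute.of_commute {X Y : R} (h : Commute X Y) : PhaseCommute X Y :=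
  ⟨1, norm_one, by rw [one_smul]; exact h.eq⟩

lemma mul_eq_inv_smul_mul {X Y : R} {γ : ℂ} (hγ : γ ≠ 0) (h : X * Y = γ • (Y * X)) :
    Y * X = γ⁻¹ • (X * Y) := by
  rw [h, smul_smul, inv_mul_cancel₀ hγ, one_smul]

lemma PhaseCommute.symm {X Y : R} (h : PhaseCommute X Y) : PhaseCommute Y X := by
  obtain ⟨γ, hγ, h⟩ := h
  exact ⟨γ⁻¹, by rw [norm_inv, hγ, inv_one], mul_eq_inv_smul_mul (ne_zero_of_norm_eq_one hγ) h⟩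

lemma PhaseCommute.mul_right_of_commute {X Y Z : R} (h : PhaseCommute X Y)
    (hZ : Commute Z Y) : PhaseCommute (X * Z) Y := by
  obtain ⟨γ, hγ, h⟩ := h
  exact ⟨γ, hγ, by rw [mul_assoc, hZ.eq, ← mul_assoc, h, smul_mul_assoc, mul_assoc]⟩

lemma mul_pow_eq_smul_pow_mul {X K : R} {γ : ℂ} (h : X * K = γ • (K * X)) (t : ℕ) :
    X * K ^ t = γ ^ t • (K ^ t * X) := by
  induction t with
  | zero => simp
  | succ t ih =>
    rw [pow_succ, ← mul_assoc, ih, smul_mul_assoc, mul_assoc, h, mul_smul_comm, smul_smul,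
      ← mul_assoc, ← pow_succ, ← pow_succ]

lemma pow_eq_one_of_mul_eq_smul_mul [NoZeroSMulDivisors ℂ R] {X K : R} {γ : ℂ} {k : ℕ}
    (hK : K ^ k = 1) (hX : X ≠ 0) (h : X * K = γ • (K * X)) : γ ^ k = 1 := by
  have hX' : (γ ^ k - 1) • X = 0 := by
    rw [sub_smul, one_smul, ← one_mul X, ← hK, ← mul_pow_eq_smul_pow_mul h, hK, mul_one,
      one_mul, sub_self]
  exact sub_eq_zero.mp ((smul_eq_zero.mp hX').resolve_right hX)

lemma commute_mul_star_of_mul_eq_smul_mul [StarRing R] {W X K : R} {γ : ℂ} (hγ : γ ≠ 0)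
    (hW : W ∈ unitary R) (hWK : W * K = γ • (K * W)) (hXK : X * K = γ • (K * X)) :
    Commute (X * star W) K := by
  have hK : K * star W = γ • (star W * K) := by
    calc K * star W = star W * (W * K) * star W := by
          rw [← mul_assoc, Unitary.star_mul_self_of_mem hW, one_mul]
      _ = γ • (star W * K) := by
          rw [hWK, mul_smul_comm, smul_mul_assoc, mul_assoc, mul_assoc,
            Unitary.mul_star_self_of_mem hW, mul_one]
  calc X * star W * K = X * (star W * K) := mul_assoc _ _ _
    _ = γ⁻¹ • (X * K * star W) := by
        rw [mul_eq_inv_smul_mul hγ hK, mul_smul_comm, mul_assoc]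
    _ = K * (X * star W) := by
        rw [hXK, smul_mul_assoc, smul_smul, inv_mul_cancel₀ hγ, one_smul, mul_assoc]

end PhaseCommute

section Generation

variable {G I : Type*} [AddGroup G] {v : I → G}

lemma apply_add_eq_of_forall_add_eq {β : Type*} {f : G → β}
    (hv : AddSubgroup.closure (Set.range v) = ⊤) (hf : ∀ i t, f (t + v i) = f t) (t w : G) :
    f (t + w) = f t := by
  have hw : w ∈ AddSubgroup.closure (Set.range v) := hv ▸ AddSubgroup.mem_top w
  induction hw using AddSubgroup.closure_induction generalizing t with
  | mem _ h => obtain ⟨i, rfl⟩ := h; exact hf i t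
  | zero => rw [add_zero]
  | add a b _ _ ha hb => rw [← add_assoc, hb, ha]
  | neg a _ ha => rw [← ha, neg_add_cancel_right]

lemma map_ofAdd_mem_of_closure_eq_top {H : Type*} [Group H]
    (hv : AddSubgroup.closure (Set.range v) = ⊤) (φ : Multiplicative G →* H) {F : Subgroup H}
    (hφ : ∀ i, φ (.ofAdd (v i)) ∈ F) (w : G) : φ (.ofAdd w) ∈ F := by
  have hw : w ∈ AddSubgroup.closure (Set.range v) := hv ▸ AddSubgroup.mem_top w
  induction hw using AddSubgroup.closure_induction with
  | mem _ h => obtain ⟨i, rfl⟩ := h; exact hφ i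
  | zero => rw [ofAdd_zero, map_one]; exact F.one_mem
  | add a b _ _ ha hb => rw [ofAdd_add, map_mul]; exact F.mul_mem ha hb
  | neg a _ ha => rw [ofAdd_neg, map_inv]; exact F.inv_mem ha

end Generation

section MatrixFacts

variable {κ : Type*} [Fintype κ] [DecidableEq κ]

lemma diagonal_mem_unitary_iff {d : κ → ℂ} :
    diagonal d ∈ unitary (Matrix κ κ ℂ) ↔ ∀ r, ‖d r‖ = 1 := by
  simp only [Unitary.mem_iff, star_eq_conjTranspose, diagonal_conjTranspose,
    diagonal_mul_diagonal, ← diagonal_one, diagonal_eq_diagonal_iff, Pi.star_apply,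
    RCLike.star_def, Complex.conj_mul', Complex.mul_conj', and_self]
  refine forall_congr' fun r => ?_
  norm_cast
  exact pow_eq_one_iff_of_nonneg (norm_nonneg _) two_ne_zero

lemma exists_apply_ne_zero_of_mem_unitary {M : Matrix κ κ ℂ}
    (hM : M ∈ unitary (Matrix κ κ ℂ)) (r : κ) : ∃ s, M r s ≠ 0 := by
  by_contra! h
  have h1 : (M * star M) r r = (1 : Matrix κ κ ℂ) r r := by
    rw [Unitary.mul_star_self_of_mem hM]
  simp [mul_apply, h] at h1

lemma ne_zero_of_mem_unitary [Nonempty κ] {M : Matrix κ κ ℂ}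
    (hM : M ∈ unitary (Matrix κ κ ℂ)) : M ≠ 0 := fun h =>
  (one_ne_zero : (1 : Matrix κ κ ℂ) ≠ 0)
    (by simpa [h] using (Unitary.star_mul_self_of_mem hM).symm)

lemma apply_eq_zero_of_commute_diagonal {X : Matrix κ κ ℂ} {d : κ → ℂ}
    (h : Commute X (diagonal d)) {p q : κ} (hpq : d p ≠ d q) : X p q = 0 := by
  have h' := congrFun (congrFun h.eq p) q
  rw [mul_diagonal, diagonal_mul, mul_comm] at h'
  exact (mul_eq_mul_right_iff.mp h').resolve_left (Ne.symm hpq)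

end MatrixFacts

section KroneckerOne

variable {κ μ : Type*} [Fintype κ] [Fintype μ] [DecidableEq μ]

omit [Fintype κ] [Fintype μ] in
lemma kronecker_one_apply (A : Matrix κ κ ℂ) (a b : κ) (u v : μ) :
    (A ⊗ₖ (1 : Matrix μ μ ℂ)) (a, u) (b, v) = if u = v then A a b else 0 := by
  simp [one_apply]

lemma kronecker_one_mul_eq_smul_mul {X K : Matrix κ κ ℂ} {γ : ℂ} (h : X * K = γ • (K * X)) :
    (X ⊗ₖ (1 : Matrix μ μ ℂ)) * (K ⊗ₖ 1) = γ • ((K ⊗ₖ 1) * (X ⊗ₖ 1)) := by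
  rw [← mul_kronecker_mul, ← mul_kronecker_mul, h, smul_kronecker, mul_one]

lemma submatrix_mul_kronecker_one (X : Matrix (κ × μ) (κ × μ) ℂ) (A : Matrix κ κ ℂ) (u w : μ) :
    (X * (A ⊗ₖ 1)).submatrix (·, u) (·, w) = X.submatrix (·, u) (·, w) * A := by
  ext x y
  simp [mul_apply, Fintype.sum_prod_type, one_apply]

lemma submatrix_kronecker_one_mul (X : Matrix (κ × μ) (κ × μ) ℂ) (A : Matrix κ κ ℂ) (u w : μ) :
    ((A ⊗ₖ 1) * X).submatrix (·, u) (·, w) = A * X.submatrix (·, u) (·, w) := by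
  ext x y
  simp [mul_apply, Fintype.sum_prod_type, one_apply]

lemma Commute.submatrix_of_kronecker_one {X : Matrix (κ × μ) (κ × μ) ℂ} {A : Matrix κ κ ℂ}
    (h : Commute X (A ⊗ₖ 1)) (u w : μ) : Commute (X.submatrix (·, u) (·, w)) A := by
  rw [Commute, SemiconjBy, ← submatrix_mul_kronecker_one, h.eq, submatrix_kronecker_one_mul]

variable [DecidableEq κ]

omit [Fintype κ] [Fintype μ] in
lemma one_kronecker_diagonal (d : μ → ℂ) :
    (1 : Matrix κ κ ℂ) ⊗ₖ diagonal d = diagonal fun r => d r.2 := by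
  rw [← diagonal_one, diagonal_kronecker_diagonal]
  simp

omit [Fintype κ] [Fintype μ] in
lemma one_kronecker_diagonal_apply (d : μ → ℂ) (a b : κ) (u v : μ) :
    ((1 : Matrix κ κ ℂ) ⊗ₖ diagonal d) (a, u) (b, v) = if a = b ∧ u = v then d u else 0 := by
  simp only [one_kronecker_diagonal, diagonal_apply, Prod.mk.injEq]

variable (κ μ) in
def kroneckerOneHom : Matrix κ κ ℂ →⋆* Matrix (κ × μ) (κ × μ) ℂ where
  toFun A := A ⊗ₖ 1
  map_one' := one_kronecker_one
  map_mul' A B := by rw [← mul_kronecker_mul, mul_one]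
  map_star' A := by simp [star_eq_conjTranspose, conjTranspose_kronecker]

lemma kronecker_one_pow (A : Matrix κ κ ℂ) (k : ℕ) :
    (A ⊗ₖ (1 : Matrix μ μ ℂ)) ^ k = (A ^ k) ⊗ₖ 1 :=
  (map_pow (kroneckerOneHom κ μ) A k).symm

lemma commute_kronecker_one_one_kronecker (A : Matrix κ κ ℂ) (B : Matrix μ μ ℂ) :
    Commute (A ⊗ₖ 1) (1 ⊗ₖ B) := by
  rw [Commute, SemiconjBy, ← mul_kronecker_mul, ← mul_kronecker_mul]
  simp

end KroneckerOne

section Translation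

variable {G : Type*} [AddCommGroup G] [DecidableEq G]

def transMatrix (v : G) : Matrix G G ℂ := of fun x y => if x = y + v then 1 else 0

lemma transMatrix_zero : transMatrix (0 : G) = 1 := by
  ext x y; simp [transMatrix, one_apply]

lemma star_transMatrix (v : G) : star (transMatrix v) = transMatrix (-v) := by
  ext x y; simp [transMatrix, eq_comm, ← sub_eq_add_neg, eq_sub_iff_add_eq]

variable [Fintype G]

lemma mul_transMatrix_apply {κ : Type*} (X : Matrix κ G ℂ) (v : G) (p : κ) (y : G) :
    (X * transMatrix v) p y = X p (y + v) := by
  simp [transMatrix, mul_apply]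

lemma transMatrix_mul_apply {κ : Type*} (X : Matrix G κ ℂ) (v : G) (x : G) (q : κ) :
    (transMatrix v * X) x q = X (x - v) q := by
  simp [transMatrix, mul_apply, ← sub_eq_iff_eq_add]

lemma transMatrix_add (v w : G) : transMatrix (v + w) = transMatrix v * transMatrix w := by
  ext x y
  rw [transMatrix_mul_apply]
  simp [transMatrix, sub_eq_iff_eq_add, add_assoc, add_comm w]

lemma transMatrix_nsmul (k : ℕ) (v : G) : transMatrix (k • v) = transMatrix v ^ k := by
  induction k with
  | zero => rw [zero_nsmul, transMatrix_zero, pow_zero]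
  | succ k ih => rw [succ_nsmul, transMatrix_add, ih, pow_succ]

lemma commute_transMatrix (v w : G) : Commute (transMatrix v) (transMatrix w) := by
  rw [Commute, SemiconjBy, ← transMatrix_add, ← transMatrix_add, add_comm]

lemma transMatrix_mem_unitary (v : G) : transMatrix v ∈ unitary (Matrix G G ℂ) := by
  rw [Unitary.mem_iff, star_transMatrix, ← transMatrix_add, ← transMatrix_add, neg_add_cancel,
    add_neg_cancel, transMatrix_zero]
  exact ⟨rfl, rfl⟩

def transUnitary : Multiplicative G →* unitary (Matrix G G ℂ) where
  toFun v := ⟨transMatrix v.toAdd, transMatrix_mem_unitary _⟩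
  map_one' := Subtype.ext transMatrix_zero
  map_mul' v w := Subtype.ext (transMatrix_add v.toAdd w.toAdd)

lemma apply_add_add_of_commute_transMatrix {Y : Matrix G G ℂ} {v : G}
    (h : Commute Y (transMatrix v)) (x y : G) : Y (x + v) (y + v) = Y x y := by
  have h' := congrFun (congrFun h.eq (x + v)) y
  rwa [mul_transMatrix_apply, transMatrix_mul_apply, add_sub_cancel_right] at h'

theorem eq_smul_one_of_commute {I : Type*} {χ : I → G → ℂ}
    (hχ : ∀ x y, (∀ i, χ i x = χ i y) → x = y) {v : I → G}
    (hv : AddSubgroup.closure (Set.range v) = ⊤) {Y : Matrix G G ℂ}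
    (hD : ∀ i, Commute Y (diagonal (χ i))) (hT : ∀ i, Commute Y (transMatrix (v i))) :
    Y = Y 0 0 • 1 := by
  ext x y
  by_cases hxy : x = y
  · subst hxy
    simpa using apply_add_eq_of_forall_add_eq (f := fun t => Y t t) hv
      (fun i t => apply_add_add_of_commute_transMatrix (hT i) t t) 0 x
  · obtain ⟨i, hi⟩ : ∃ i, χ i x ≠ χ i y := by
      by_contra! h
      exact hxy (hχ x y h)
    simp [apply_eq_zero_of_commute_diagonal (hD i) hi, one_apply_ne hxy]

theorem eq_one_kronecker_of_commute {μ I : Type*} [Fintype μ] [DecidableEq μ]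
    {χ : I → G → ℂ} (hχ : ∀ x y, (∀ i, χ i x = χ i y) → x = y) {v : I → G}
    (hv : AddSubgroup.closure (Set.range v) = ⊤) {X : Matrix (G × μ) (G × μ) ℂ}
    (hD : ∀ i, Commute X (diagonal (χ i) ⊗ₖ 1)) (hT : ∀ i, Commute X (transMatrix (v i) ⊗ₖ 1)) :
    X = 1 ⊗ₖ of fun u w => X (0, u) (0, w) := by
  ext ⟨x, u⟩ ⟨y, w⟩
  have h := congrFun (congrFun (eq_smul_one_of_commute hχ hv
    (fun i => (hD i).submatrix_of_kronecker_one u w)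
    (fun i => (hT i).submatrix_of_kronecker_one u w)) x) y
  simpa [mul_comm] using h

end Translation

theorem apply_eq_zero_of_phaseCommute_one_kronecker_diagonal {κ μ : Type*} [Fintype κ]
    [DecidableEq κ] [Fintype μ] [DecidableEq μ] {M : Matrix (κ × μ) (κ × μ) ℂ}
    (hM : M ∈ unitary (Matrix (κ × μ) (κ × μ) ℂ))
    (hD : ∀ d : μ → ℂ, (∀ u, ‖d u‖ = 1) → PhaseCommute M (1 ⊗ₖ diagonal d))
    {p q : κ × μ} (hpq : p.2 ≠ q.2) : M p q = 0 := by
  by_contra hMpq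
  -- Test against `d = i` on the `q.2`-th factor and `1` elsewhere: the entry `(p, q)` forces the
  -- phase to be `i`, and then a nonzero entry in row `q` would need the value `i * i = -1` of `d`.
  set d : μ → ℂ := Function.update 1 q.2 Complex.I
  have hd : ∀ u, d u = 1 ∨ d u = Complex.I := fun u => by
    by_cases hu : u = q.2 <;> simp [d, hu]
  obtain ⟨γ, -, hγ⟩ := hD d fun u => by rcases hd u with h | h <;> simp [h]
  rw [one_kronecker_diagonal] at hγ
  have hentry : ∀ r s, M r s * d s.2 = γ * (d r.2 * M r s) := fun r s => by
    simpa [mul_diagonal, diagonal_mul] using congrFun (congrFun hγ r) s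
  have hγI : γ = Complex.I := by
    have := hentry p q
    simp only [d, Function.update_self, Function.update_of_ne hpq, Pi.one_apply, one_mul] at this
    exact (mul_left_cancel₀ hMpq (by rw [this, mul_comm])).symm
  obtain ⟨s, hs⟩ := exists_apply_ne_zero_of_mem_unitary hM q
  have h := hentry q s
  simp only [d, Function.update_self, hγI] at h
  have hds : d s.2 = -1 :=
    mul_left_cancel₀ hs (by rw [h, ← mul_assoc, Complex.I_mul_I]; ring)
  rcases hd s.2 with h1 | h1 <;> rw [h1] at hds <;> norm_num [Complex.ext_iff] at hds

def unitRoot (k : ℕ) : ℂ := Complex.exp (2 * Real.pi * Complex.I / k)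

lemma isPrimitiveRoot_unitRoot (k : ℕ) [NeZero k] : IsPrimitiveRoot (unitRoot k) k :=
  Complex.isPrimitiveRoot_exp k (NeZero.ne k)

lemma norm_unitRoot (k : ℕ) : ‖unitRoot k‖ = 1 := by
  rw [unitRoot, show 2 * (Real.pi : ℂ) * Complex.I / k = ((2 * Real.pi / k : ℝ) : ℂ) * Complex.I
    by push_cast; ring, Complex.norm_exp_ofReal_mul_I]

lemma unitRoot_pow_eq_pow_of_modEq {k a b : ℕ} [NeZero k] (h : a ≡ b [MOD k]) :
    unitRoot k ^ a = unitRoot k ^ b := by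
  have hmod : ∀ c, unitRoot k ^ c = unitRoot k ^ (c % k) := fun c => by
    conv_lhs => rw [← Nat.div_add_mod c k, pow_add, pow_mul,
      (isPrimitiveRoot_unitRoot k).pow_eq_one, one_pow, one_mul]
  rw [hmod a, hmod b, h]

lemma Fin.val_nsmul_one (k : ℕ) [NeZero k] (n : ℕ) : ((n • (1 : Fin k) : Fin k) : ℕ) = n % k := by
  induction n with
  | zero => simp
  | succ n ih => rw [succ_nsmul, Fin.val_add, ih, Fin.val_one', ← Nat.add_mod]

section Pairing

variable {s : ℕ} {nn : Fin s → ℕ}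

abbrev PiFin (nn : Fin s → ℕ) := (j : Fin s) → Fin (nn j)

def pairing (b x : PiFin nn) : ℂ := ∏ j, unitRoot (nn j) ^ ((b j : ℕ) * (x j : ℕ))

lemma pairing_comm (b x : PiFin nn) : pairing b x = pairing x b := by
  simp only [pairing, mul_comm]

lemma norm_pairing (b x : PiFin nn) : ‖pairing b x‖ = 1 := by
  simp [pairing, norm_unitRoot]

variable [∀ j, NeZero (nn j)]

lemma pairing_zero_left (x : PiFin nn) : pairing 0 x = 1 := by
  simp [pairing]

lemma pairing_add_left (b c x : PiFin nn) : pairing (b + c) x = pairing b x * pairing c x := by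
  rw [pairing, pairing, pairing, ← Finset.prod_mul_distrib]
  refine Finset.prod_congr rfl fun j _ => ?_
  rw [← pow_add, ← add_mul]
  exact unitRoot_pow_eq_pow_of_modEq ((Nat.mod_modEq _ _).mul_right _)

lemma pairing_add_right (b x y : PiFin nn) : pairing b (x + y) = pairing b x * pairing b y := by
  rw [pairing_comm, pairing_add_left, pairing_comm x, pairing_comm y]

lemma pairing_single_one_left (i : Fin s) (x : PiFin nn) :
    pairing (Pi.single i 1) x = unitRoot (nn i) ^ (x i : ℕ) := by
  rw [pairing, Finset.prod_eq_single i (fun j _ hj => by simp [Pi.single_eq_of_ne hj])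
    (by simp), Pi.single_eq_same, Fin.val_one']
  exact unitRoot_pow_eq_pow_of_modEq (by rw [Nat.ModEq, Nat.mod_mul_mod, one_mul])

lemma eq_of_forall_pairing_single_one_eq {x y : PiFin nn}
    (h : ∀ i, pairing (Pi.single i 1) x = pairing (Pi.single i 1) y) : x = y := by
  funext i
  have h := h i
  rw [pairing_single_one_left, pairing_single_one_left] at h
  exact Fin.ext ((isPrimitiveRoot_unitRoot _).pow_inj (x i).isLt (y i).isLt h)

lemma exists_forall_pairing_single_one_eq {α : Fin s → ℂ} (hα : ∀ i, α i ^ nn i = 1) :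
    ∃ w : PiFin nn, ∀ i, pairing (Pi.single i 1) w = α i := by
  choose t ht hαt using fun i => (isPrimitiveRoot_unitRoot (nn i)).eq_pow_of_pow_eq_one (hα i)
  exact ⟨fun i => ⟨t i, ht i⟩, fun i => by rw [pairing_single_one_left, hαt]⟩

lemma closure_range_single_one :
    AddSubgroup.closure (Set.range fun i => (Pi.single i 1 : PiFin nn)) = ⊤ := by
  refine eq_top_iff.mpr fun x _ => ?_
  rw [← Finset.univ_sum_single x]
  refine AddSubgroup.sum_mem _ fun i _ => ?_
  have hx : (x i : ℕ) • (1 : Fin (nn i)) = x i :=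
    Fin.ext ((Fin.val_nsmul_one _ _).trans (Nat.mod_eq_of_lt (x i).isLt))
  rw [← hx, Pi.single_nsmul]
  exact AddSubgroup.nsmul_mem _ (AddSubgroup.subset_closure (Set.mem_range_self i)) _

lemma nsmul_single_one (i : Fin s) : nn i • (Pi.single i 1 : PiFin nn) = 0 := by
  have h : nn i • (1 : Fin (nn i)) = 0 :=
    Fin.ext ((Fin.val_nsmul_one _ _).trans (Nat.mod_self _))
  rw [← Pi.single_nsmul, h, Pi.single_zero]

end Pairing

section Clock

variable {s : ℕ} {nn : Fin s → ℕ}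

def clockMatrix (b : PiFin nn) : Matrix (PiFin nn) (PiFin nn) ℂ := diagonal (pairing b)

lemma clockMatrix_mem_unitary (b : PiFin nn) : clockMatrix b ∈ unitary (Matrix _ _ ℂ) :=
  diagonal_mem_unitary_iff.mpr (norm_pairing b)

variable [∀ j, NeZero (nn j)]

lemma clockMatrix_zero : clockMatrix (0 : PiFin nn) = 1 := by
  ext x y
  simp [clockMatrix, pairing_zero_left, diagonal_apply, one_apply]

lemma clockMatrix_add (b c : PiFin nn) :
    clockMatrix (b + c) = clockMatrix b * clockMatrix c := by
  rw [clockMatrix, clockMatrix, clockMatrix, diagonal_mul_diagonal]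
  exact congrArg diagonal (funext (pairing_add_left b c))

lemma clockMatrix_nsmul (k : ℕ) (b : PiFin nn) : clockMatrix (k • b) = clockMatrix b ^ k := by
  induction k with
  | zero => rw [zero_nsmul, clockMatrix_zero, pow_zero]
  | succ k ih => rw [succ_nsmul, clockMatrix_add, ih, pow_succ]

lemma commute_clockMatrix (b c : PiFin nn) : Commute (clockMatrix b) (clockMatrix c) := by
  rw [Commute, SemiconjBy, ← clockMatrix_add, ← clockMatrix_add, add_comm]

def clockUnitary : Multiplicative (PiFin nn) →* unitary (Matrix (PiFin nn) (PiFin nn) ℂ) where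
  toFun b := ⟨clockMatrix b.toAdd, clockMatrix_mem_unitary _⟩
  map_one' := Subtype.ext clockMatrix_zero
  map_mul' b c := Subtype.ext (clockMatrix_add b.toAdd c.toAdd)

lemma clockMatrix_mul_transMatrix (b v : PiFin nn) :
    clockMatrix b * transMatrix v = pairing b v • (transMatrix v * clockMatrix b) := by
  ext x y
  rw [mul_transMatrix_apply, Matrix.smul_apply, transMatrix_mul_apply]
  by_cases h : x = y + v
  · simp [clockMatrix, h, pairing_add_right, mul_comm]
  · simp [clockMatrix, h, sub_eq_iff_eq_add]

lemma transMatrix_mul_clockMatrix_mul_clockMatrix (w b c : PiFin nn) :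
    transMatrix w * clockMatrix b * clockMatrix c
      = (pairing c w)⁻¹ • (clockMatrix c * (transMatrix w * clockMatrix b)) := by
  rw [mul_assoc, (commute_clockMatrix b c).eq, ← mul_assoc, ← mul_assoc,
    mul_eq_inv_smul_mul (ne_zero_of_norm_eq_one (norm_pairing c w))
      (clockMatrix_mul_transMatrix c w), smul_mul_assoc]

lemma transMatrix_mul_clockMatrix_mul_transMatrix (w b v : PiFin nn) :
    transMatrix w * clockMatrix b * transMatrix v
      = pairing b v • (transMatrix v * (transMatrix w * clockMatrix b)) := by
  rw [mul_assoc, clockMatrix_mul_transMatrix, mul_smul_comm, ← mul_assoc, ← mul_assoc,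
    (commute_transMatrix w v).eq]

lemma kronFactor_Amat (i : Fin s) :
    kronFactor nn i (Amat (nn i)) = clockMatrix (Pi.single i 1) := by
  ext x y
  by_cases h : x = y
  · subst h
    simp [kronFactor, Amat, clockMatrix, pairing_single_one_left, unitRoot]
  · by_cases hxy : ∀ j, j ≠ i → x j = y j
    · have hi : x i ≠ y i := fun hi => h (funext fun j => by
        by_cases hj : j = i
        · exact hj ▸ hi
        · exact hxy j hj)
      simp [kronFactor, Amat, clockMatrix, hi, h]
    · simp [kronFactor, clockMatrix, hxy, h]

lemma kronFactor_Bmat (i : Fin s) :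
    kronFactor nn i (Bmat (nn i)) = transMatrix (Pi.single i 1) := by
  ext x y
  have key : x = y + Pi.single i 1 ↔
      (∀ j, j ≠ i → x j = y j) ∧ (x i : ℕ) = ((y i : ℕ) + 1) % nn i := by
    constructor
    · rintro rfl
      exact ⟨fun j hj => by simp [Pi.single_eq_of_ne hj], by simp [Fin.val_add]⟩
    · rintro ⟨hne, hi⟩
      funext j
      by_cases hj : j = i
      · subst hj
        exact Fin.ext (by simp [Fin.val_add, hi])
      · simp [Pi.single_eq_of_ne hj, hne j hj]
  simp only [kronFactor, Bmat, transMatrix, of_apply, key]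
  split_ifs <;> tauto

end Clock

section Structure

variable {s : ℕ} {nn : Fin s → ℕ} [∀ j, NeZero (nn j)] {μ : Type*} [Fintype μ] [DecidableEq μ]

lemma exists_commute_mul_star_weyl {M : Matrix (PiFin nn × μ) (PiFin nn × μ) ℂ} (hM : M ≠ 0)
    (hA : ∀ i, PhaseCommute M (clockMatrix (Pi.single i 1) ⊗ₖ 1))
    (hB : ∀ i, PhaseCommute M (transMatrix (Pi.single i 1) ⊗ₖ 1)) :
    ∃ w b : PiFin nn,
      (∀ i, Commute (M * star ((transMatrix w * clockMatrix b) ⊗ₖ 1))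
        (clockMatrix (Pi.single i 1) ⊗ₖ 1)) ∧
      (∀ i, Commute (M * star ((transMatrix w * clockMatrix b) ⊗ₖ 1))
        (transMatrix (Pi.single i 1) ⊗ₖ 1)) := by
  choose α hα hαM using hA
  choose β hβ hβM using hB
  have hαpow : ∀ i, α i ^ nn i = 1 := fun i => pow_eq_one_of_mul_eq_smul_mul
    (by rw [kronecker_one_pow, ← clockMatrix_nsmul, nsmul_single_one, clockMatrix_zero,
      one_kronecker_one]) hM (hαM i)
  have hβpow : ∀ i, β i ^ nn i = 1 := fun i => pow_eq_one_of_mul_eq_smul_mul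
    (by rw [kronecker_one_pow, ← transMatrix_nsmul, nsmul_single_one, transMatrix_zero,
      one_kronecker_one]) hM (hβM i)
  obtain ⟨w, hw⟩ := exists_forall_pairing_single_one_eq (α := fun i => (α i)⁻¹)
    (fun i => by rw [inv_pow, hαpow, inv_one])
  obtain ⟨b, hb⟩ := exists_forall_pairing_single_one_eq hβpow
  have hWu : (transMatrix w * clockMatrix b) ⊗ₖ (1 : Matrix μ μ ℂ) ∈ unitary _ :=
    Unitary.map_mem (kroneckerOneHom _ μ)
      (mul_mem (transMatrix_mem_unitary w) (clockMatrix_mem_unitary b))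
  refine ⟨w, b, fun i => ?_, fun i => ?_⟩
  · refine commute_mul_star_of_mul_eq_smul_mul (ne_zero_of_norm_eq_one (hα i)) hWu
      (kronecker_one_mul_eq_smul_mul ?_) (hαM i)
    rw [transMatrix_mul_clockMatrix_mul_clockMatrix, hw, inv_inv]
  · refine commute_mul_star_of_mul_eq_smul_mul (ne_zero_of_norm_eq_one (hβ i)) hWu
      (kronecker_one_mul_eq_smul_mul ?_) (hβM i)
    rw [transMatrix_mul_clockMatrix_mul_transMatrix, pairing_comm, hb]
theorem exists_eq_weyl_kronecker_one_mul_one_kronecker_diagonal [Nonempty μ]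
    {M : Matrix (PiFin nn × μ) (PiFin nn × μ) ℂ}
    (hM : M ∈ unitary (Matrix (PiFin nn × μ) (PiFin nn × μ) ℂ))
    (hA : ∀ i, PhaseCommute M (clockMatrix (Pi.single i 1) ⊗ₖ 1))
    (hB : ∀ i, PhaseCommute M (transMatrix (Pi.single i 1) ⊗ₖ 1))
    (hD : ∀ d : μ → ℂ, (∀ u, ‖d u‖ = 1) → PhaseCommute M (1 ⊗ₖ diagonal d)) :
    ∃ (w b : PiFin nn) (c : μ → ℂ), (∀ u, ‖c u‖ = 1) ∧
      M = (transMatrix w * clockMatrix b) ⊗ₖ 1 * (1 ⊗ₖ diagonal c) := by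
  obtain ⟨w, b, hA', hB'⟩ := exists_commute_mul_star_weyl (ne_zero_of_mem_unitary hM) hA hB
  generalize hWdef : transMatrix w * clockMatrix b = W at hA' hB'
  have hWu : W ⊗ₖ (1 : Matrix μ μ ℂ) ∈ unitary _ :=
    hWdef ▸ Unitary.map_mem (kroneckerOneHom _ μ)
      (mul_mem (transMatrix_mem_unitary w) (clockMatrix_mem_unitary b))
  have hWstar : star (W ⊗ₖ (1 : Matrix μ μ ℂ)) = star W ⊗ₖ 1 :=
    (map_star (kroneckerOneHom _ μ) W).symm
  generalize hNdef : M * star (W ⊗ₖ (1 : Matrix μ μ ℂ)) = N at hA' hB'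
  have hNu : N ∈ unitary _ := hNdef ▸ mul_mem hM (Unitary.star_mem hWu)
  have hN : N = 1 ⊗ₖ of fun u v => N (0, u) (0, v) :=
    eq_one_kronecker_of_commute (χ := fun i => pairing (Pi.single i 1))
      (fun _ _ => eq_of_forall_pairing_single_one_eq) closure_range_single_one hA' hB'
  have hND : ∀ d : μ → ℂ, (∀ u, ‖d u‖ = 1) → PhaseCommute N (1 ⊗ₖ diagonal d) := fun d hd =>
    hNdef ▸ (hD d hd).mul_right_of_commute (hWstar ▸ commute_kronecker_one_one_kronecker _ _)
  obtain ⟨c, hcdef⟩ : ∃ c : μ → ℂ, c = fun u => N (0, u) (0, u) := ⟨_, rfl⟩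
  have hNc : N = 1 ⊗ₖ diagonal c := by
    refine hN.trans (congrArg _ (ext fun u v => ?_))
    by_cases huv : u = v
    · simp [hcdef, huv]
    · have h0 := apply_eq_zero_of_phaseCommute_one_kronecker_diagonal hNu hND
        (p := (0, u)) (q := (0, v)) huv
      simp [diagonal_apply_ne _ huv, h0]
  have hc : ∀ u, ‖c u‖ = 1 := fun u =>
    diagonal_mem_unitary_iff.mp (one_kronecker_diagonal (κ := PiFin nn) c ▸ hNc ▸ hNu) (0, u)
  refine ⟨w, b, c, hc, ?_⟩
  rw [hWdef]
  calc M = N * (W ⊗ₖ 1) := by rw [← hNdef, mul_assoc, Unitary.star_mul_self_of_mem hWu, mul_one]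
    _ = W ⊗ₖ 1 * (1 ⊗ₖ diagonal c) := by
      rw [hNc]; exact (commute_kronecker_one_one_kronecker _ _).eq.symm

end Structure

section Projective

lemma PU.mk_eq_mk_iff {ν : Type} [Fintype ν] [DecidableEq ν] (U V : UG ν) :
    (QuotientGroup.mk U : PU ν) = QuotientGroup.mk V ↔
      ∃ c : ℂ, ‖c‖ = 1 ∧ (U : Matrix ν ν ℂ) = c • (V : Matrix ν ν ℂ) := by
  rw [eq_comm, QuotientGroup.eq]
  change (∃ c : ℂ, ‖c‖ = 1 ∧ ((V⁻¹ * U : UG ν) : Matrix ν ν ℂ) = c • 1) ↔ _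
  simp only [UnitaryGroup.mul_val, UnitaryGroup.inv_val]
  refine exists_congr fun c => and_congr_right fun _ => ⟨fun h => ?_, fun h => ?_⟩
  · rw [← one_mul (U : Matrix ν ν ℂ), ← Unitary.mul_star_self_of_mem V.2, mul_assoc, h,
      mul_smul_comm, mul_one]
  · rw [h, mul_smul_comm, Unitary.star_mul_self_of_mem V.2]

variable {κ ν : Type} [Fintype κ] [DecidableEq κ] [Fintype ν] [DecidableEq ν]

def reindexStarMulEquiv (e : κ ≃ ν) : Matrix κ κ ℂ ≃⋆* Matrix ν ν ℂ where
  __ := (reindexAlgEquiv ℂ ℂ e).toRingEquiv.toMulEquiv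
  map_star' M := (conjTranspose_reindex e e M).symm

def projClass (e : κ ≃ ν) : unitary (Matrix κ κ ℂ) →* PU ν :=
  (QuotientGroup.mk' (scalarSG ν)).comp (Unitary.mapEquiv (reindexStarMulEquiv e)).toMonoidHom

lemma projClass_apply (e : κ ≃ ν) (x : unitary (Matrix κ κ ℂ)) :
    projClass e x = QuotientGroup.mk (Unitary.mapEquiv (reindexStarMulEquiv e) x) := rfl

lemma coe_mapEquiv_reindexStarMulEquiv (e : κ ≃ ν) (x : unitary (Matrix κ κ ℂ)) :
    ((Unitary.mapEquiv (reindexStarMulEquiv e) x : unitary (Matrix ν ν ℂ)) : Matrix ν ν ℂ)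
      = reindex e e x := rfl

lemma projClass_surjective (e : κ ≃ ν) : Function.Surjective (projClass e) :=
  QuotientGroup.mk_surjective.comp (Unitary.mapEquiv (reindexStarMulEquiv e)).surjective

lemma projClass_eq_iff (e : κ ≃ ν) (x y : unitary (Matrix κ κ ℂ)) :
    projClass e x = projClass e y ↔
      ∃ c : ℂ, ‖c‖ = 1 ∧ (x : Matrix κ κ ℂ) = c • (y : Matrix κ κ ℂ) := by
  rw [projClass_apply, projClass_apply, PU.mk_eq_mk_iff]
  simp only [coe_mapEquiv_reindexStarMulEquiv]
  refine exists_congr fun c => and_congr_right fun _ => ?_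
  rw [← (reindex e e).injective.eq_iff, reindex_apply, reindex_apply, reindex_apply, submatrix_smul]
  rfl

lemma projClass_mul_comm_iff (e : κ ≃ ν) (x y : unitary (Matrix κ κ ℂ)) :
    projClass e x * projClass e y = projClass e y * projClass e x ↔
      PhaseCommute (x : Matrix κ κ ℂ) y := by
  rw [← map_mul, ← map_mul, projClass_eq_iff]
  rfl

lemma exists_projClass_eq_iff (e : κ ≃ ν) (z : PU ν) (X : Matrix κ κ ℂ) :
    (∃ U : UG ν, QuotientGroup.mk U = z ∧ ∀ p q, (U : Matrix ν ν ℂ) (e p) (e q) = X p q) ↔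
      ∃ x : unitary (Matrix κ κ ℂ), projClass e x = z ∧ (x : Matrix κ κ ℂ) = X := by
  constructor
  · rintro ⟨U, rfl, hU⟩
    refine ⟨(Unitary.mapEquiv (reindexStarMulEquiv e)).symm U, ?_, ext fun p q => ?_⟩
    · rw [projClass_apply, StarMulEquiv.apply_symm_apply]
    · rw [← hU]; rfl
  · rintro ⟨x, rfl, rfl⟩
    exact ⟨Unitary.mapEquiv (reindexStarMulEquiv e) x, rfl, fun p q => by
      rw [coe_mapEquiv_reindexStarMulEquiv, reindex_apply, submatrix_apply, e.symm_apply_apply,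
        e.symm_apply_apply]⟩

end Projective

section Generators

variable {s : ℕ} {nn : Fin s → ℕ} [∀ j, NeZero (nn j)] {μ : Type} [Fintype μ] [DecidableEq μ]

def IsWeylGenerator (X : Matrix (PiFin nn × μ) (PiFin nn × μ) ℂ) : Prop :=
  (∃ i, X = clockMatrix (Pi.single i 1) ⊗ₖ 1) ∨ (∃ i, X = transMatrix (Pi.single i 1) ⊗ₖ 1) ∨
    ∃ d : μ → ℂ, (∀ u, ‖d u‖ = 1) ∧ X = 1 ⊗ₖ diagonal d

lemma IsWeylGenerator.mem_unitary {X : Matrix (PiFin nn × μ) (PiFin nn × μ) ℂ}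
    (hX : IsWeylGenerator X) : X ∈ unitary (Matrix (PiFin nn × μ) (PiFin nn × μ) ℂ) := by
  rcases hX with ⟨i, rfl⟩ | ⟨i, rfl⟩ | ⟨d, hd, rfl⟩
  · exact Unitary.map_mem (kroneckerOneHom _ μ) (clockMatrix_mem_unitary _)
  · exact Unitary.map_mem (kroneckerOneHom _ μ) (transMatrix_mem_unitary _)
  · exact one_kronecker_diagonal (κ := PiFin nn) d ▸
      diagonal_mem_unitary_iff.mpr fun r => hd r.2

lemma IsWeylGenerator.phaseCommute {X Y : Matrix (PiFin nn × μ) (PiFin nn × μ) ℂ}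
    (hX : IsWeylGenerator X) (hY : IsWeylGenerator Y) : PhaseCommute X Y := by
  have clock_trans : ∀ b v : PiFin nn,
      PhaseCommute (clockMatrix b ⊗ₖ (1 : Matrix μ μ ℂ)) (transMatrix v ⊗ₖ 1) := fun b v =>
    ⟨pairing b v, norm_pairing b v, kronecker_one_mul_eq_smul_mul (clockMatrix_mul_transMatrix b v)⟩
  have kron_diag : ∀ (A : Matrix (PiFin nn) (PiFin nn) ℂ) (d : μ → ℂ),
      PhaseCommute (A ⊗ₖ 1) (1 ⊗ₖ diagonal d) := fun A d =>
    .of_commute (commute_kronecker_one_one_kronecker A _)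
  rcases hX with ⟨i, rfl⟩ | ⟨i, rfl⟩ | ⟨d, -, rfl⟩ <;>
    rcases hY with ⟨j, rfl⟩ | ⟨j, rfl⟩ | ⟨d', -, rfl⟩
  · exact .of_commute ((commute_clockMatrix _ _).map (kroneckerOneHom _ μ))
  · exact clock_trans _ _
  · exact kron_diag _ _
  · exact (clock_trans _ _).symm
  · exact .of_commute ((commute_transMatrix _ _).map (kroneckerOneHom _ μ))
  · exact kron_diag _ _
  · exact (kron_diag _ _).symm
  · exact (kron_diag _ _).symm
  · refine .of_commute ?_
    rw [one_kronecker_diagonal, one_kronecker_diagonal]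
    exact commute_diagonal _ _

variable (μ) in
def weylShift :
    Multiplicative (PiFin nn) →* unitary (Matrix (PiFin nn × μ) (PiFin nn × μ) ℂ) :=
  (Unitary.map (kroneckerOneHom _ μ)).toMonoidHom.comp transUnitary

variable (μ) in
def weylClock :
    Multiplicative (PiFin nn) →* unitary (Matrix (PiFin nn × μ) (PiFin nn × μ) ℂ) :=
  (Unitary.map (kroneckerOneHom _ μ)).toMonoidHom.comp clockUnitary

lemma projClass_mem_of_eq_weyl {ν : Type} [Fintype ν] [DecidableEq ν] (e : PiFin nn × μ ≃ ν)
    {F : Subgroup (PU ν)}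
    (hF : ∀ y : unitary (Matrix (PiFin nn × μ) (PiFin nn × μ) ℂ),
      IsWeylGenerator (y : Matrix (PiFin nn × μ) (PiFin nn × μ) ℂ) → projClass e y ∈ F)
    {x : unitary (Matrix (PiFin nn × μ) (PiFin nn × μ) ℂ)} {w b : PiFin nn} {c : μ → ℂ}
    (hc : ∀ u, ‖c u‖ = 1)
    (hx : (x : Matrix _ _ ℂ) = (transMatrix w * clockMatrix b) ⊗ₖ 1 * (1 ⊗ₖ diagonal c)) :
    projClass e x ∈ F := by
  have hshift := map_ofAdd_mem_of_closure_eq_top closure_range_single_one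
    ((projClass e).comp (weylShift μ)) (fun i => hF _ (Or.inr (Or.inl ⟨i, rfl⟩)))
  have hclock := map_ofAdd_mem_of_closure_eq_top closure_range_single_one
    ((projClass e).comp (weylClock μ)) (fun i => hF _ (Or.inl ⟨i, rfl⟩))
  have hcu : (1 : Matrix (PiFin nn) _ ℂ) ⊗ₖ diagonal c ∈ unitary _ :=
    one_kronecker_diagonal (κ := PiFin nn) c ▸
      diagonal_mem_unitary_iff.mpr fun r : PiFin nn × μ => hc r.2
  have hdiag := hF ⟨_, hcu⟩ (Or.inr (Or.inr ⟨c, hc, rfl⟩))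
  have hx' : x = weylShift μ (.ofAdd w) * weylClock μ (.ofAdd b) * ⟨_, hcu⟩ :=
    Subtype.ext (hx.trans (congrArg (· * _) (map_mul (kroneckerOneHom (PiFin nn) μ) _ _)))
  rw [hx', map_mul, map_mul]
  exact mul_mem (mul_mem (hshift w) (hclock b)) hdiag

lemma maxAbelianA_eq_closure {n m : ℕ} (e : (PiFin nn × Fin m) ≃ Fin n) :
    maxAbelianA n m nn e = Subgroup.closure
      (projClass e '' {x | IsWeylGenerator (x : Matrix (PiFin nn × Fin m) _ ℂ)}) := by
  rw [maxAbelianA]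
  congr 1
  ext z
  have key := exists_projClass_eq_iff e z
  simp only [Prod.forall] at key
  simp only [Set.mem_union, Set.mem_ofPred_eq, Set.mem_image]
  constructor
  · rintro (⟨i, U, rfl, hU | hU⟩ | ⟨d, U, hd, rfl, hU⟩)
    · obtain ⟨x, hx, hxX⟩ := (key (clockMatrix (Pi.single i 1) ⊗ₖ 1)).mp
        ⟨U, rfl, fun a u b v => by rw [hU, kronecker_one_apply, kronFactor_Amat]⟩
      exact ⟨x, Or.inl ⟨i, hxX⟩, hx⟩
    · obtain ⟨x, hx, hxX⟩ := (key (transMatrix (Pi.single i 1) ⊗ₖ 1)).mp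
        ⟨U, rfl, fun a u b v => by rw [hU, kronecker_one_apply, kronFactor_Bmat]⟩
      exact ⟨x, Or.inr (Or.inl ⟨i, hxX⟩), hx⟩
    · obtain ⟨x, hx, hxX⟩ := (key (1 ⊗ₖ diagonal d)).mp
        ⟨U, rfl, fun a u b v => by rw [hU, one_kronecker_diagonal_apply]⟩
      exact ⟨x, Or.inr (Or.inr ⟨d, hd, hxX⟩), hx⟩
  · rintro ⟨x, hx, rfl⟩
    obtain ⟨U, hU, hUx⟩ := (key x).mpr ⟨x, rfl, rfl⟩
    rcases hx with ⟨i, hi⟩ | ⟨i, hi⟩ | ⟨d, hd, hi⟩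
    · exact Or.inl ⟨i, U, hU, Or.inl fun a b u v => by
        rw [hUx a u b v, hi, kronecker_one_apply, kronFactor_Amat]⟩
    · exact Or.inl ⟨i, U, hU, Or.inr fun a b u v => by
        rw [hUx a u b v, hi, kronecker_one_apply, kronFactor_Bmat]⟩
    · exact Or.inr ⟨d, U, hd, hU, fun a b u v => by
        rw [hUx a u b v, hi, one_kronecker_diagonal_apply]⟩

end Generators

theorem maxAbelianA_is_maximal_abelian_general (n m : ℕ) (hm : 1 ≤ m) {s : ℕ} (nn : Fin s → ℕ)
    (h2 : ∀ i, 2 ≤ nn i)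
    (e : (((j : Fin s) → Fin (nn j)) × Fin m) ≃ Fin n) :
    (∀ x ∈ maxAbelianA n m nn e, ∀ y ∈ maxAbelianA n m nn e, x * y = y * x) ∧
    (∀ z : PU (Fin n), (∀ x ∈ maxAbelianA n m nn e, z * x = x * z) →
      z ∈ maxAbelianA n m nn e) := by
  have : ∀ j, NeZero (nn j) := fun j => ⟨by have := h2 j; omega⟩
  have : Nonempty (Fin m) := ⟨⟨0, hm⟩⟩
  rw [maxAbelianA_eq_closure]
  set S := projClass e '' {x | IsWeylGenerator (x : Matrix (PiFin nn × Fin m) _ ℂ)}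
  refine ⟨fun x hx y hy => ?_, fun z hz => ?_⟩
  · have hS : ∀ x ∈ S, ∀ y ∈ S, x * y = y * x := by
      rintro _ ⟨x, hx, rfl⟩ _ ⟨y, hy, rfl⟩
      exact (projClass_mul_comm_iff e x y).mpr (hx.phaseCommute hy)
    have := Subgroup.isMulCommutative_closure hS
    exact congrArg Subtype.val (this.is_comm.comm ⟨x, hx⟩ ⟨y, hy⟩)
  · obtain ⟨M, rfl⟩ := projClass_surjective e z
    have hgen : ∀ X, IsWeylGenerator X → PhaseCommute (M : Matrix _ _ ℂ) X := fun X hX =>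
      (projClass_mul_comm_iff e M ⟨X, hX.mem_unitary⟩).mp
        (hz _ (Subgroup.subset_closure ⟨⟨X, hX.mem_unitary⟩, hX, rfl⟩))
    obtain ⟨w, b, c, hc, hM⟩ := exists_eq_weyl_kronecker_one_mul_one_kronecker_diagonal M.2
      (fun i => hgen _ (Or.inl ⟨i, rfl⟩)) (fun i => hgen _ (Or.inr (Or.inl ⟨i, rfl⟩)))
      (fun d hd => hgen _ (Or.inr (Or.inr ⟨d, hd, rfl⟩)))
    exact projClass_mem_of_eq_weyl e (F := Subgroup.closure S)
      (fun y hy => Subgroup.subset_closure ⟨y, hy, rfl⟩) hc hM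

/-- With `n = n₁⋯n_s·m`, the subgroup of `PU(n)` generated by
`H_{n₁} ⊗ ⋯ ⊗ H_{n_s}` together with `I ⊗ ⋯ ⊗ I ⊗ D` for diagonal unitary `D ∈ U(m)` is a
maximal abelian subgroup of `PU(n)`. -/
theorem maxAbelianA_is_maximal_abelian (n m : ℕ) (hm : 1 ≤ m) {s : ℕ} (nn : Fin s → ℕ)
    (h2 : ∀ i, 2 ≤ nn i) (hanti : Antitone nn)
    (hdvd : ∀ (i : ℕ) (h : i + 1 < s), nn ⟨i + 1, h⟩ ∣ nn ⟨i, Nat.lt_of_succ_lt h⟩)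
    (hn : (∏ i, nn i) * m = n)
    (e : (((j : Fin s) → Fin (nn j)) × Fin m) ≃ Fin n) :
    (∀ x ∈ maxAbelianA n m nn e, ∀ y ∈ maxAbelianA n m nn e, x * y = y * x) ∧
    (∀ z : PU (Fin n), (∀ x ∈ maxAbelianA n m nn e, z * x = x * z) →
      z ∈ maxAbelianA n m nn e) :=
  maxAbelianA_is_maximal_abelian_general n m hm nn h2 e
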